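/- arXiv:1501.07569 — 4 statements merged into one kernel-verified Lean document; each statement's English description precedes it below -/
import Mathlib

section
/- Let a > 0, e ∈ [0,1), and E₁, E₂ ∈ ℝ with 0 ≤ E₂ − E₁ ≤ 2π. Let P(E) = (a(cos E − e), a√(1−e²) sin E) ∈ ℝ², and set r₁ = ‖P(E₁)‖, r₂ = ‖P(E₂)‖, d = ‖P(E₂) − P(E₁)‖. Then there exist β, γ ∈ ℝ such that sin²(β/2) = (r₁ + r₂ + d)/(4a), sin²(γ/2) = (r₁ + r₂ − d)/(4a), 0 ≤ β − γ ≤ 2π, and (E₂ − e sin E₂) − (E₁ − e sin E₁) = β − γ − (sin β − sin γ). -/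
open Real

/-- Elliptic position at eccentric anomaly `E`, with the attracting focus at the origin. -/
noncomputable def ellP (a e E : ℝ) : EuclideanSpace ℝ (Fin 2) :=
  (WithLp.equiv 2 (Fin 2 → ℝ)).symm
    ![a * (Real.cos E - e), a * Real.sqrt (1 - e ^ 2) * Real.sin E]

/-!
With `G = (E₁ + E₂)/2` and `H = (E₂ - E₁)/2`, the sum-to-product formulas give
`r₁ + r₂ = 2a(1 - e cos G cos H)`, `d = 2a sin H √(1 - (e cos G)²)` and
`(E₂ - e sin E₂) - (E₁ - e sin E₁) = 2H - 2 e cos G sin H`.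
Choosing the auxiliary angle `ε` with `cos ε = e cos G` and `sin ε ≥ 0`, these read
`r₁ + r₂ ± d = 2a(1 - cos (ε ∓ H))` and `2H - 2 cos ε sin H`, so `β = ε + H`, `γ = ε - H` work.
-/

lemma norm_sq_equiv_symm_vec_two (x y : ℝ) :
    ‖(WithLp.equiv 2 (Fin 2 → ℝ)).symm ![x, y]‖ ^ 2 = x ^ 2 + y ^ 2 := by
  simp [EuclideanSpace.real_norm_sq_eq, Fin.sum_univ_two]

lemma ellP_sub_ellP (a e E₁ E₂ : ℝ) :
    ellP a e E₂ - ellP a e E₁ = (WithLp.equiv 2 (Fin 2 → ℝ)).symm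
      ![a * (cos E₂ - cos E₁), a * √(1 - e ^ 2) * (sin E₂ - sin E₁)] := by
  ext i
  fin_cases i <;> simp [ellP] <;> ring

lemma norm_ellP {a e : ℝ} (ha : 0 ≤ a) (he : e ^ 2 ≤ 1) (E : ℝ) :
    ‖ellP a e E‖ = a * (1 - e * cos E) := by
  have hsq : ‖ellP a e E‖ ^ 2 = (a * (1 - e * cos E)) ^ 2 := by
    rw [ellP, norm_sq_equiv_symm_vec_two]
    linear_combination (a ^ 2 * sin E ^ 2) * sq_sqrt (sub_nonneg.2 he)
      + (a ^ 2 * (1 - e ^ 2)) * sin_sq_add_cos_sq E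
  have he_cos : e * cos E ≤ 1 := by nlinarith [sq_nonneg (e - cos E), cos_sq_le_one E]
  exact (sq_eq_sq₀ (norm_nonneg _) (mul_nonneg ha (by linarith))).1 hsq

lemma norm_ellP_add_norm_ellP {a e : ℝ} (ha : 0 ≤ a) (he : e ^ 2 ≤ 1) (E₁ E₂ : ℝ) :
    ‖ellP a e E₁‖ + ‖ellP a e E₂‖
      = 2 * a * (1 - e * cos ((E₂ + E₁) / 2) * cos ((E₂ - E₁) / 2)) := by
  rw [norm_ellP ha he, norm_ellP ha he]
  linear_combination (-a * e) * cos_add_cos E₂ E₁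

lemma norm_ellP_sub_ellP {a e : ℝ} (ha : 0 ≤ a) (he : e ^ 2 ≤ 1) (E₁ E₂ : ℝ) :
    ‖ellP a e E₂ - ellP a e E₁‖
      = 2 * a * |sin ((E₂ - E₁) / 2)| * √(1 - (e * cos ((E₂ + E₁) / 2)) ^ 2) := by
  have hsq : ‖ellP a e E₂ - ellP a e E₁‖ ^ 2
      = (2 * a * |sin ((E₂ - E₁) / 2)|) ^ 2 * (1 - (e * cos ((E₂ + E₁) / 2)) ^ 2) := by
    rw [ellP_sub_ellP, norm_sq_equiv_symm_vec_two, mul_pow _ |_|, sq_abs, cos_sub_cos, sin_sub_sin]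
    linear_combination (4 * a ^ 2 * sin ((E₂ - E₁) / 2) ^ 2) *
      (sin_sq_add_cos_sq ((E₂ + E₁) / 2) + cos ((E₂ + E₁) / 2) ^ 2 * sq_sqrt (sub_nonneg.2 he))
  rw [← sqrt_sq (norm_nonneg _), hsq, sqrt_mul (sq_nonneg _),
    sqrt_sq (mul_nonneg (by positivity) (abs_nonneg _))]

/-- Lambert's theorem for elliptic motion. -/
theorem lambert_elliptic (a e E₁ E₂ : ℝ) (ha : 0 < a) (he0 : 0 ≤ e) (he1 : e < 1)
    (hE0 : 0 ≤ E₂ - E₁) (hE2 : E₂ - E₁ ≤ 2 * π) :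
    ∃ β γ : ℝ,
      Real.sin (β / 2) ^ 2
        = (‖ellP a e E₁‖ + ‖ellP a e E₂‖ + ‖ellP a e E₂ - ellP a e E₁‖) / (4 * a) ∧
      Real.sin (γ / 2) ^ 2
        = (‖ellP a e E₁‖ + ‖ellP a e E₂‖ - ‖ellP a e E₂ - ellP a e E₁‖) / (4 * a) ∧
      0 ≤ β - γ ∧ β - γ ≤ 2 * π ∧
      (E₂ - e * Real.sin E₂) - (E₁ - e * Real.sin E₁)
        = β - γ - (Real.sin β - Real.sin γ) := by
  have he : e ^ 2 ≤ 1 := by nlinarith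
  have hsum := norm_ellP_add_norm_ellP ha.le he E₁ E₂
  have hchord := norm_ellP_sub_ellP ha.le he E₁ E₂
  set G := (E₂ + E₁) / 2
  set H := (E₂ - E₁) / 2 with hH
  have hsinH : 0 ≤ sin H := sin_nonneg_of_nonneg_of_le_pi (by linarith) (by linarith)
  have heG : |e * cos G| ≤ 1 := by
    rw [abs_mul]
    exact mul_le_one₀ (abs_le.2 ⟨by linarith, he1.le⟩) (abs_nonneg _) (abs_cos_le_one G)
  obtain ⟨ε, hcos, hsin⟩ : ∃ ε, cos ε = e * cos G ∧ sin ε = √(1 - (e * cos G) ^ 2) :=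
    ⟨arccos (e * cos G), cos_arccos (abs_le.1 heG).1 (abs_le.1 heG).2, sin_arccos _⟩
  rw [← hcos] at hsum
  rw [abs_of_nonneg hsinH, ← hsin] at hchord
  have half_sq (x : ℝ) : sin (x / 2) ^ 2 = (1 - cos x) / 2 := by
    rw [sin_sq_eq_half_sub, mul_div_cancel₀ _ two_ne_zero]; ring
  refine ⟨ε + H, ε - H, ?_, ?_, by linarith, by linarith, ?_⟩
  · rw [half_sq, hsum, hchord, cos_add]; field_simp; ring
  · rw [half_sq, hsum, hchord, cos_sub]; field_simp; ring
  · rw [sin_add, sin_sub, hcos]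
    linear_combination (-e) * sin_sub_sin E₂ E₁
end

section
/- Let eρ, eα, eδ be an orthonormal triple of vectors in Euclidean ℝ³, let q, q̇, q̈ ∈ ℝ³, let ρ, ρ̇, ρ̈, ξ, ζ, μ ∈ ℝ with ρ ≠ 0, and set r = q + ρ·eρ and w = ξ·eα + ζ·eδ + ρ̇·eρ + q̇. Assume r ≠ 0, and define 𝓔 = ½‖w‖² − μ/‖r‖ and 𝓚 = ρ̈ − (ξ² + ζ²)/ρ + q̈·eρ + μ(r·eρ)/‖r‖³. Then 2𝓔 + ρ𝓚 = 2(q̇·eα)ξ + 2(q̇·eδ)ζ + ‖ρ̇·eρ + q̇‖² − 2μ/‖r‖ + ρρ̈ + ρ(q̈·eρ) + μρ(r·eρ)/‖r‖³. In particular 2𝓔 + ρ𝓚 is an affine function of (ξ, ζ). -/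
open Real RealInnerProductSpace

/-- The combination `2𝓔 + ρ𝓚` is affine in `(ξ, ζ)`. -/
theorem energy_plus_rhoK_affine
    (eρ eα eδ q qd qdd : EuclideanSpace ℝ (Fin 3))
    (ρ ρd ρdd ξ ζ μ : ℝ) (hρ : ρ ≠ 0)
    (hρ1 : ‖eρ‖ = 1) (hα1 : ‖eα‖ = 1) (hδ1 : ‖eδ‖ = 1)
    (hρα : ⟪eρ, eα⟫ = 0) (hρδ : ⟪eρ, eδ⟫ = 0) (hαδ : ⟪eα, eδ⟫ = 0)
    (r w : EuclideanSpace ℝ (Fin 3))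
    (hr : r = q + ρ • eρ)
    (hw : w = ξ • eα + ζ • eδ + ρd • eρ + qd)
    (hr0 : r ≠ 0)
    (En K : ℝ)
    (hE : En = (1 / 2) * ‖w‖ ^ 2 - μ / ‖r‖)
    (hK : K = ρdd - (ξ ^ 2 + ζ ^ 2) / ρ + ⟪qdd, eρ⟫ + μ * ⟪r, eρ⟫ / ‖r‖ ^ 3) :
    2 * En + ρ * K
      = 2 * ⟪qd, eα⟫ * ξ + 2 * ⟪qd, eδ⟫ * ζ + ‖ρd • eρ + qd‖ ^ 2
        - 2 * μ / ‖r‖ + ρ * ρdd + ρ * ⟪qdd, eρ⟫ + μ * ρ * ⟪r, eρ⟫ / ‖r‖ ^ 3 := by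
  set u : EuclideanSpace ℝ (Fin 3) := ρd • eρ + qd with hu
  have hw' : w = (ξ • eα + ζ • eδ) + u := by rw [hw, hu]; abel
  have hab : ⟪ξ • eα, ζ • eδ⟫ = 0 := by
    simp [inner_smul_left, inner_smul_right, hαδ]
  have hau : ⟪ξ • eα, u⟫ = ξ * ⟪qd, eα⟫ := by
    rw [hu, inner_add_right, real_inner_smul_left, real_inner_smul_right,
      real_inner_smul_left, real_inner_comm eρ eα, hρα, real_inner_comm qd eα]
    ring
  have hbu : ⟪ζ • eδ, u⟫ = ζ * ⟪qd, eδ⟫ := by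
    rw [hu, inner_add_right, real_inner_smul_left, real_inner_smul_right,
      real_inner_smul_left, real_inner_comm eρ eδ, hρδ, real_inner_comm qd eδ]
    ring
  have hnab : ‖ξ • eα + ζ • eδ‖ ^ 2 = ξ ^ 2 + ζ ^ 2 := by
    rw [norm_add_sq_real, hab, norm_smul, norm_smul, hα1, hδ1]
    simp [mul_pow, sq_abs]
  have habu : ⟪ξ • eα + ζ • eδ, u⟫ = ξ * ⟪qd, eα⟫ + ζ * ⟪qd, eδ⟫ := by
    rw [inner_add_left, hau, hbu]
  have hwsq : ‖w‖ ^ 2 = ξ ^ 2 + ζ ^ 2 + 2 * (ξ * ⟪qd, eα⟫ + ζ * ⟪qd, eδ⟫) + ‖u‖ ^ 2 := by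
    rw [hw', norm_add_sq_real, hnab, habu]
  rw [hE, hK, hwsq]
  field_simp
  ring
end

section
/- Let μ ∈ ℝ, let e, q : ℝ → ℝ³ be twice differentiable with ‖e(t)‖ = 1 for all t, let ρ : ℝ → ℝ be twice differentiable, and set r(t) = q(t) + ρ(t)·e(t). Fix t ∈ ℝ, assume r(t) ≠ 0 and that r̈(t) = −(μ/‖r(t)‖³)·r(t). Then ρ̈(t) − ρ(t)‖ė(t)‖² + q̈(t)·e(t) + μ(r(t)·e(t))/‖r(t)‖³ = 0. -/
/-!
Differentiating `‖e‖² = 1` twice gives `⟪e, ė⟫ = 0` and `⟪e, ë⟫ = -‖ė‖²`. Expanding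
`r̈ = q̈ + ρ̈ e + 2 ρ̇ ė + ρ ë` and taking the inner product with `e`, the middle term vanishes and
Newton's equation turns the left-hand side into `-μ ⟪r, e⟫ / ‖r‖³`.
-/

open Real RealInnerProductSpace

section SecondDerivative

variable {𝕜 E : Type*} [NontriviallyNormedField 𝕜] [NormedAddCommGroup E] [NormedSpace 𝕜 E]
  {q e : 𝕜 → E} {ρ : 𝕜 → 𝕜}

theorem deriv_add_smul (hq : Differentiable 𝕜 q) (hρ : Differentiable 𝕜 ρ)
    (he : Differentiable 𝕜 e) :
    deriv (fun s => q s + ρ s • e s) =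
      fun s => deriv q s + (ρ s • deriv e s + deriv ρ s • e s) := by
  funext s
  rw [deriv_fun_add (hq s) ((hρ s).fun_smul (he s)), deriv_fun_smul (hρ s) (he s)]

theorem deriv_deriv_add_smul (hq : Differentiable 𝕜 q) (hρ : Differentiable 𝕜 ρ)
    (he : Differentiable 𝕜 e) {x : 𝕜} (hq' : DifferentiableAt 𝕜 (deriv q) x)
    (hρ' : DifferentiableAt 𝕜 (deriv ρ) x) (he' : DifferentiableAt 𝕜 (deriv e) x) :
    deriv (deriv fun s => q s + ρ s • e s) x = deriv (deriv q) x + deriv (deriv ρ) x • e x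
      + (2 * deriv ρ x) • deriv e x + ρ x • deriv (deriv e) x := by
  rw [deriv_add_smul hq hρ he,
    deriv_fun_add hq' (((hρ x).fun_smul he').fun_add (hρ'.fun_smul (he x))),
    deriv_fun_add ((hρ x).fun_smul he') (hρ'.fun_smul (he x)), deriv_fun_smul (hρ x) he',
    deriv_fun_smul hρ' (he x)]
  module

end SecondDerivative

section ConstantNorm

variable {E : Type*} [NormedAddCommGroup E] [InnerProductSpace ℝ E] {f g : ℝ → E} {x : ℝ}

theorem inner_deriv_add_inner_deriv_eq_zero {c : ℝ} (hf : DifferentiableAt ℝ f x)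
    (hg : DifferentiableAt ℝ g x) (h : ∀ s, ⟪f s, g s⟫ = c) :
    ⟪f x, deriv g x⟫ + ⟪deriv f x, g x⟫ = 0 := by
  rw [← deriv_inner_apply ℝ hf hg, funext h, deriv_const]

theorem inner_deriv_eq_zero_of_norm_eq {c : ℝ} (h : ∀ s, ‖f s‖ = c)
    (hf : DifferentiableAt ℝ f x) : ⟪f x, deriv f x⟫ = 0 := by
  have h_const : ∀ s, ⟪f s, f s⟫ = c ^ 2 := fun s => by rw [real_inner_self_eq_norm_sq, h s]
  have := inner_deriv_add_inner_deriv_eq_zero hf hf h_const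
  rw [real_inner_comm (f x)] at this
  linarith

theorem inner_deriv_deriv_eq_neg_norm_sq_of_norm_eq {c : ℝ} (h : ∀ s, ‖f s‖ = c)
    (hf : Differentiable ℝ f) (hf' : DifferentiableAt ℝ (deriv f) x) :
    ⟪f x, deriv (deriv f) x⟫ = -‖deriv f x‖ ^ 2 := by
  have := inner_deriv_add_inner_deriv_eq_zero (hf x) hf'
    fun s => inner_deriv_eq_zero_of_norm_eq h (hf s)
  rw [real_inner_self_eq_norm_sq] at this
  linarith

end ConstantNorm

theorem newton_projection_los_general (μ : ℝ)
    (e q : ℝ → EuclideanSpace ℝ (Fin 3)) (ρ : ℝ → ℝ)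
    (he : Differentiable ℝ e) (he' : Differentiable ℝ (deriv e))
    (hq : Differentiable ℝ q) (hq' : Differentiable ℝ (deriv q))
    (hρ : Differentiable ℝ ρ) (hρ' : Differentiable ℝ (deriv ρ))
    (hunit : ∀ t, ‖e t‖ = 1)
    (r : ℝ → EuclideanSpace ℝ (Fin 3)) (hr : ∀ t, r t = q t + ρ t • e t)
    (t : ℝ)
    (hNewton : deriv (deriv r) t = -(μ / ‖r t‖ ^ 3) • r t) :
    deriv (deriv ρ) t - ρ t * ‖deriv e t‖ ^ 2 + ⟪deriv (deriv q) t, e t⟫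
      + μ * ⟪r t, e t⟫ / ‖r t‖ ^ 3 = 0 := by
  have h_acc : deriv (deriv r) t = deriv (deriv q) t + deriv (deriv ρ) t • e t
      + (2 * deriv ρ t) • deriv e t + ρ t • deriv (deriv e) t := by
    rw [funext hr]
    exact deriv_deriv_add_smul hq hρ he (hq' t) (hρ' t) (he' t)
  have h_proj := congrArg (⟪e t, ·⟫) hNewton
  simp only [h_acc, inner_add_right, real_inner_smul_right,
    inner_deriv_eq_zero_of_norm_eq hunit (he t),
    inner_deriv_deriv_eq_neg_norm_sq_of_norm_eq hunit he (he' t),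
    real_inner_self_eq_norm_sq, hunit] at h_proj
  rw [real_inner_comm (e t) (deriv (deriv q) t), real_inner_comm (e t) (r t)]
  linear_combination h_proj

/-- Projection of Newton's equation on the line of sight. -/
theorem newton_projection_los (μ : ℝ)
    (e q : ℝ → EuclideanSpace ℝ (Fin 3)) (ρ : ℝ → ℝ)
    (he : Differentiable ℝ e) (he' : Differentiable ℝ (deriv e))
    (hq : Differentiable ℝ q) (hq' : Differentiable ℝ (deriv q))
    (hρ : Differentiable ℝ ρ) (hρ' : Differentiable ℝ (deriv ρ))
    (hunit : ∀ t, ‖e t‖ = 1)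
    (r : ℝ → EuclideanSpace ℝ (Fin 3)) (hr : ∀ t, r t = q t + ρ t • e t)
    (t : ℝ) (hrt : r t ≠ 0)
    (hNewton : deriv (deriv r) t = -(μ / ‖r t‖ ^ 3) • r t) :
    deriv (deriv ρ) t - ρ t * ‖deriv e t‖ ^ 2 + ⟪deriv (deriv q) t, e t⟫
      + μ * ⟪r t, e t⟫ / ‖r t‖ ^ 3 = 0 :=
  newton_projection_los_general μ e q ρ he he' hq hq' hρ hρ' hunit r hr t hNewton
end

section
/- Let eν, eρ ∈ ℝ³ be unit vectors that are not parallel (i.e. linearly independent), let q ∈ ℝ³, and let ρ > 0 satisfy ρ ≥ |q·eν|. Then there exist A, B ∈ ℝ with B ≥ 0 such that the vector R = A·eν + B·eρ satisfies ‖R‖ = ρ and (q + R)·eν = 0. -/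
/-!
Write `c = ⟪eν, eρ⟫` and `s = ⟪q, eν⟫`. Choosing `A = -s - B c` puts `q + R` in the plane, and
then `‖R‖² = s² + B² (1 - c²)`. Linear independence gives `c² < 1` (strict Cauchy–Schwarz), so
`B = √((ρ² - s²) / (1 - c²))` gives `‖R‖ = ρ`, which is possible because `s² ≤ ρ²`.
-/

open Real RealInnerProductSpace

variable {F : Type*} [NormedAddCommGroup F] [InnerProductSpace ℝ F]

theorem abs_real_inner_lt_norm_mul_norm_of_linearIndependent {u v : F}
    (huv : LinearIndependent ℝ ![u, v]) : |⟪u, v⟫| < ‖u‖ * ‖v‖ := by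
  refine (abs_real_inner_le_norm u v).lt_of_ne fun h => ?_
  have hu : u ≠ 0 := by simpa using huv.ne_zero 0
  obtain hu' | ⟨r, rfl⟩ := (norm_inner_eq_norm_tfae ℝ u v).out 0 2 |>.mp h
  · exact hu hu'
  · exact (LinearIndependent.pair_iff' hu).mp huv r rfl

theorem sq_real_inner_lt_one_of_linearIndependent {u v : F} (hu : ‖u‖ = 1) (hv : ‖v‖ = 1)
    (huv : LinearIndependent ℝ ![u, v]) : ⟪u, v⟫ ^ 2 < 1 := by
  have h := abs_real_inner_lt_norm_mul_norm_of_linearIndependent huv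
  rw [hu, hv, one_mul] at h
  simpa using sq_lt_one_iff_abs_lt_one _ |>.mpr h

theorem norm_smul_add_smul_sq_of_norm_eq_one {u v : F} (hu : ‖u‖ = 1) (hv : ‖v‖ = 1) (a b : ℝ) :
    ‖a • u + b • v‖ ^ 2 = a ^ 2 + 2 * a * b * ⟪u, v⟫ + b ^ 2 := by
  rw [norm_add_sq_real, norm_smul, norm_smul, real_inner_smul_left, real_inner_smul_right,
    hu, hv, norm_eq_abs, norm_eq_abs, mul_one, mul_one, sq_abs, sq_abs]
  ring

theorem real_inner_smul_add_smul_left_of_norm_eq_one {u v : F} (hu : ‖u‖ = 1) (a b : ℝ) :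
    ⟪a • u + b • v, u⟫ = a + b * ⟪u, v⟫ := by
  rw [inner_add_left, real_inner_smul_left, real_inner_smul_left, real_inner_self_eq_norm_sq, hu,
    real_inner_comm]
  ring

theorem exists_smul_add_smul_norm_eq_inner_eq {u v : F} (hu : ‖u‖ = 1) (hv : ‖v‖ = 1)
    (hc : ⟪u, v⟫ ^ 2 < 1) {s ρ : ℝ} (hρ : |s| ≤ ρ) :
    ∃ A B : ℝ, 0 ≤ B ∧ ‖A • u + B • v‖ = ρ ∧ ⟪A • u + B • v, u⟫ = -s := by
  set c := ⟪u, v⟫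
  have hc' : 0 < 1 - c ^ 2 := by linarith
  have hsρ : s ^ 2 ≤ ρ ^ 2 := sq_le_sq' (abs_le.mp hρ).1 (abs_le.mp hρ).2
  set B := √((ρ ^ 2 - s ^ 2) / (1 - c ^ 2))
  have hB : B ^ 2 * (1 - c ^ 2) = ρ ^ 2 - s ^ 2 := by
    rw [sq_sqrt (div_nonneg (by linarith) hc'.le), div_mul_cancel₀ _ hc'.ne']
  refine ⟨-s - B * c, B, sqrt_nonneg _, ?_, ?_⟩
  · rw [← sq_eq_sq₀ (norm_nonneg _) ((abs_nonneg s).trans hρ),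
      norm_smul_add_smul_sq_of_norm_eq_one hu hv]
    linear_combination hB
  · rw [real_inner_smul_add_smul_left_of_norm_eq_one hu]
    ring

theorem correction_solvable_general (eν eρ : EuclideanSpace ℝ (Fin 3))
    (hν1 : ‖eν‖ = 1) (hρ1 : ‖eρ‖ = 1)
    (hind : LinearIndependent ℝ ![eν, eρ])
    (q : EuclideanSpace ℝ (Fin 3)) (ρ : ℝ)
    (hρq : ρ ≥ |⟪q, eν⟫|) :
    ∃ A B : ℝ, 0 ≤ B ∧
      ‖A • eν + B • eρ‖ = ρ ∧
      ⟪q + (A • eν + B • eρ), eν⟫ = 0 := by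
  obtain ⟨A, B, hB, hnorm, hinner⟩ := exists_smul_add_smul_norm_eq_inner_eq hν1 hρ1
    (sq_real_inner_lt_one_of_linearIndependent hν1 hρ1 hind) hρq
  refine ⟨A, B, hB, hnorm, ?_⟩
  rw [inner_add_left, hinner, add_neg_cancel]

/-- Solvability of the observation-correction step. -/
theorem correction_solvable (eν eρ : EuclideanSpace ℝ (Fin 3))
    (hν1 : ‖eν‖ = 1) (hρ1 : ‖eρ‖ = 1)
    (hind : LinearIndependent ℝ ![eν, eρ])
    (q : EuclideanSpace ℝ (Fin 3)) (ρ : ℝ) (hρ : 0 < ρ)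
    (hρq : ρ ≥ |⟪q, eν⟫|) :
    ∃ A B : ℝ, 0 ≤ B ∧
      ‖A • eν + B • eρ‖ = ρ ∧
      ⟪q + (A • eν + B • eρ), eν⟫ = 0 :=
  correction_solvable_general eν eρ hν1 hρ1 hind q ρ hρq
end
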